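/- arXiv:2508.15238 — 2 statements merged into one kernel-verified Lean document; each statement's English description precedes it below -/
import Mathlib

section
/- Let 𝒢 = (V, ℰ) be a temporal graph and let [ts,te] ⊆ [ts',te']. Let 𝒢' be the temporal graph on V whose temporal edge set is the temporal edge set of 𝒯_{[ts',te']}(𝒢). Then 𝒯_{[ts,te]}(𝒢) = 𝒯_{[ts,te]}(𝒢'), i.e., the temporal k-core of 𝒢 over [ts,te] can be computed inside the temporal k-core of 𝒢 over the larger interval [ts',te']. -/
open scoped Classical

noncomputable section

/-- A temporal graph on a vertex type `V`: a finite set of temporal edges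
`(u, v, t)` with `u ≠ v`, symmetric in the two endpoints. -/
structure TemporalGraph (V : Type*) where
  E : Finset (V × V × ℕ)
  ne : ∀ e ∈ E, e.1 ≠ e.2.1
  symm : ∀ u v t, (u, v, t) ∈ E → (v, u, t) ∈ E

variable {V : Type*}

/-- The detemporalized (projected) simple graph of `G` over the interval `[ts, te]`. -/
def detemp (G : TemporalGraph V) (ts te : ℕ) : SimpleGraph V where
  Adj u v := ∃ t, ts ≤ t ∧ t ≤ te ∧ (u, v, t) ∈ G.E
  symm := ⟨fun u v ⟨t, h1, h2, h3⟩ => ⟨t, h1, h2, G.symm u v t h3⟩⟩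
  loopless := ⟨fun u ⟨_, _, _, h3⟩ => (G.ne _ h3) rfl⟩

/-- The detemporalized simple graph of `G` over all timestamps. -/
def detempAll (G : TemporalGraph V) : SimpleGraph V where
  Adj u v := ∃ t, (u, v, t) ∈ G.E
  symm := ⟨fun u v ⟨t, h3⟩ => ⟨t, G.symm u v t h3⟩⟩
  loopless := ⟨fun u ⟨_, h3⟩ => (G.ne _ h3) rfl⟩

/-- `S` is `k`-dense in the simple graph `G` if every vertex of `S` has at
least `k` neighbors inside `S`. -/
def kDense (k : ℕ) (G : SimpleGraph V) (S : Set V) : Prop :=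
  ∀ v ∈ S, k ≤ {u | u ∈ S ∧ G.Adj v u}.ncard

/-- `C_k(G)`: the union of all `k`-dense sets of `G`. -/
def coreSet (k : ℕ) (G : SimpleGraph V) : Set V :=
  ⋃₀ {S | kDense k G S}

/-- The projected temporal edge set of `G` over `[ts, te]`. -/
def projE (G : TemporalGraph V) (ts te : ℕ) : Finset (V × V × ℕ) :=
  G.E.filter fun e => ts ≤ e.2.2 ∧ e.2.2 ≤ te

/-- The vertex set of the temporal `k`-core of `G` over `[ts, te]`. -/
def tcoreV (k : ℕ) (G : TemporalGraph V) (ts te : ℕ) : Set V :=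
  coreSet k (detemp G ts te)

/-- The temporal edge set of the temporal `k`-core of `G` over `[ts, te]`. -/
def tcoreE (k : ℕ) (G : TemporalGraph V) (ts te : ℕ) : Finset (V × V × ℕ) :=
  (projE G ts te).filter fun e => e.1 ∈ tcoreV k G ts te ∧ e.2.1 ∈ tcoreV k G ts te

/-- The `k`-core time `σ_x(v, G)` of a vertex `v` w.r.t. start timestamp `x`,
in `ℕ∞` (it is `⊤` if no suitable timestamp exists). -/
def coreTime (k : ℕ) (G : TemporalGraph V) (x : ℕ) (v : V) : ℕ∞ :=
  sInf ((fun t : ℕ => (t : ℕ∞)) '' {t | x ≤ t ∧ v ∈ tcoreV k G x t})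

/-- The `k`-core time `σ_x(u, v, G)` of a pair `(u, v)` w.r.t. start timestamp `x`. -/
def edgeCoreTime (k : ℕ) (G : TemporalGraph V) (x : ℕ) (u v : V) : ℕ∞ :=
  sInf ((fun t : ℕ => (t : ℕ∞)) ''
    {t | x ≤ t ∧ u ∈ tcoreV k G x t ∧ v ∈ tcoreV k G x t ∧ (detemp G x t).Adj u v})

/-- The support time `Sup_x(u, v, G)`: the minimum timestamp `t ≥ x` with `(u, v, t) ∈ ℰ`. -/
def supTime (G : TemporalGraph V) (x : ℕ) (u v : V) : ℕ∞ :=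
  sInf ((fun t : ℕ => (t : ℕ∞)) '' {t | x ≤ t ∧ (u, v, t) ∈ G.E})

/-- The `k`-degree time `d_x(v, G)`: the minimum timestamp `t ≥ x` such that `v`
has at least `k` neighbors in the detemporalized graph over `[x, t]`. -/
def degTime (k : ℕ) (G : TemporalGraph V) (x : ℕ) (v : V) : ℕ∞ :=
  sInf ((fun t : ℕ => (t : ℕ∞)) '' {t | x ≤ t ∧ k ≤ ((detemp G x t).neighborSet v).ncard})

/-- The `k`-th smallest element of a multiset of values in `ℕ∞`
(`⊤` if the multiset has fewer than `k` elements). -/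
def kthSmallest (m : Multiset ℕ∞) (k : ℕ) : ℕ∞ :=
  (m.sort (· ≤ ·)).getD (k - 1) ⊤

end

/-! Every `k`-dense set of `G_{[ts,te]}` is `k`-dense in the larger graph `G_{[ts',te']}`, hence lies
in its core `C'`. Keeping only the temporal edges of `𝒯_{[ts',te']}(𝒢)` turns `G_{[ts,te]}` into
its restriction to `C'`, and restricting a graph to a set containing all its `k`-dense sets does
not change which sets are `k`-dense. The edge sets then agree because the vertex sets do and
the core over `[ts,te]` lies inside `C'`. -/

section SimpleGraph

variable {V : Type*} {k : ℕ} {G H : SimpleGraph V}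

lemma subset_coreSet {S : Set V} (hS : kDense k G S) : S ⊆ coreSet k G :=
  Set.subset_sUnion_of_mem hS

lemma kDense.mono (hle : G ≤ H) (hfin : ∀ v, (H.neighborSet v).Finite) {S : Set V}
    (hS : kDense k G S) : kDense k H S := fun v hv =>
  (hS v hv).trans <| Set.ncard_le_ncard (fun _ ⟨hu, hadj⟩ => ⟨hu, hle hadj⟩)
    ((hfin v).subset fun _ ⟨_, hadj⟩ => hadj)

lemma coreSet_mono (hle : G ≤ H) (hfin : ∀ v, (H.neighborSet v).Finite) :
    coreSet k G ⊆ coreSet k H :=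
  Set.sUnion_subset fun _ hS => subset_coreSet (kDense.mono hle hfin hS)

lemma coreSet_eq_of_adj_iff {C : Set V} (hfin : ∀ v, (G.neighborSet v).Finite)
    (hadj : ∀ u v, H.Adj u v ↔ G.Adj u v ∧ u ∈ C ∧ v ∈ C) (hC : coreSet k G ⊆ C) :
    coreSet k H = coreSet k G := by
  have hle : H ≤ G := fun u v huv => ((hadj u v).1 huv).1
  refine (coreSet_mono hle hfin).antisymm (Set.sUnion_subset fun S hS => subset_coreSet ?_)
  have hSC : S ⊆ C := (subset_coreSet hS).trans hC
  intro v hv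
  refine (hS v hv).trans_eq (congrArg Set.ncard (Set.ext fun u => ?_))
  exact ⟨fun ⟨hu, hvu⟩ => ⟨hu, (hadj v u).2 ⟨hvu, hSC hv, hSC hu⟩⟩,
    fun ⟨hu, hvu⟩ => ⟨hu, ((hadj v u).1 hvu).1⟩⟩

end SimpleGraph

section TemporalGraph

variable {V : Type*} {k : ℕ} {G G' : TemporalGraph V} {ts te ts' te' : ℕ}

lemma detemp_neighborSet_finite (G : TemporalGraph V) (ts te : ℕ) (v : V) :
    ((detemp G ts te).neighborSet v).Finite :=
  (G.E.finite_toSet.image fun e => e.2.1).subset fun u ⟨t, _, _, he⟩ => ⟨(v, u, t), he, rfl⟩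

lemma detemp_mono (h1 : ts' ≤ ts) (h3 : te ≤ te') : detemp G ts te ≤ detemp G ts' te' :=
  fun _ _ ⟨t, hts, hte, he⟩ => ⟨t, h1.trans hts, hte.trans h3, he⟩

lemma tcoreV_mono (h1 : ts' ≤ ts) (h3 : te ≤ te') : tcoreV k G ts te ⊆ tcoreV k G ts' te' :=
  coreSet_mono (detemp_mono h1 h3) (detemp_neighborSet_finite G ts' te')

lemma mem_tcoreE {e : V × V × ℕ} :
    e ∈ tcoreE k G ts te ↔ e ∈ G.E ∧ (ts ≤ e.2.2 ∧ e.2.2 ≤ te) ∧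
      e.1 ∈ tcoreV k G ts te ∧ e.2.1 ∈ tcoreV k G ts te := by
  simp only [tcoreE, projE, Finset.mem_filter, and_assoc]

lemma detemp_adj_iff_of_E_eq_tcoreE (hG' : G'.E = tcoreE k G ts' te') (h1 : ts' ≤ ts)
    (h3 : te ≤ te') (u v : V) :
    (detemp G' ts te).Adj u v ↔
      (detemp G ts te).Adj u v ∧ u ∈ tcoreV k G ts' te' ∧ v ∈ tcoreV k G ts' te' := by
  simp only [detemp, hG', mem_tcoreE]
  constructor
  · rintro ⟨t, hts, hte, he, -, hu, hv⟩
    exact ⟨⟨t, hts, hte, he⟩, hu, hv⟩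
  · rintro ⟨⟨t, hts, hte, he⟩, hu, hv⟩
    exact ⟨t, hts, hte, he, ⟨h1.trans hts, hte.trans h3⟩, hu, hv⟩

end TemporalGraph

theorem stmt2_general {V : Type*} (k : ℕ) (G G' : TemporalGraph V)
    (ts te ts' te' : ℕ) (h1 : ts' ≤ ts) (h3 : te ≤ te')
    (hG' : G'.E = tcoreE k G ts' te') :
    tcoreV k G ts te = tcoreV k G' ts te ∧
      tcoreE k G ts te = tcoreE k G' ts te := by
  have hV : tcoreV k G' ts te = tcoreV k G ts te :=
    coreSet_eq_of_adj_iff (detemp_neighborSet_finite G ts te)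
      (detemp_adj_iff_of_E_eq_tcoreE hG' h1 h3) (tcoreV_mono h1 h3)
  refine ⟨hV.symm, ?_⟩
  ext ⟨u, v, t⟩
  have hsub : tcoreV k G ts te ⊆ tcoreV k G ts' te' := tcoreV_mono h1 h3
  simp only [mem_tcoreE, hG', hV]
  constructor
  · rintro ⟨he, ⟨hts, hte⟩, hu, hv⟩
    exact ⟨⟨he, ⟨h1.trans hts, hte.trans h3⟩, hsub hu, hsub hv⟩, ⟨hts, hte⟩, hu, hv⟩
  · rintro ⟨⟨he, -⟩, ht, hu, hv⟩
    exact ⟨he, ht, hu, hv⟩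

/-- If `[ts, te] ⊆ [ts', te']` and `G'` is the temporal graph whose
temporal edge set is the temporal edge set of `𝒯_{[ts', te']}(G)`, then
`𝒯_{[ts, te]}(G) = 𝒯_{[ts, te]}(G')`. -/
theorem stmt2 {V : Type*} [Fintype V] (k : ℕ) (G G' : TemporalGraph V)
    (ts te ts' te' : ℕ) (h1 : ts' ≤ ts) (h2 : ts ≤ te) (h3 : te ≤ te')
    (hG' : G'.E = tcoreE k G ts' te') :
    tcoreV k G ts te = tcoreV k G' ts te ∧
      tcoreE k G ts te = tcoreE k G' ts te :=
  stmt2_general k G G' ts te ts' te' h1 h3 hG'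
end

section
/- Let 𝒢 = (V, ℰ) be a temporal graph, x a timestamp, and v ∈ V. Then the vertex k-core time σ_x(v,𝒢) equals the k-th smallest element of the multiset {σ_x(u,v,𝒢) : u adjacent to v in the detemporalized graph of 𝒢}, with the convention that this value is ∞ (in ℕ ∪ {∞}) when fewer than k elements of this multiset are finite. -/
open scoped Classical

/-!
Both sides lie in `ℕ∞`, so it suffices to show that, for every `t : ℕ`, one is `≤ t` iff the other
is. Cores grow with the window, so `σ_x(v) ≤ t` means `v ∈ C_k(G_{[x,t]})`, i.e. `v` has at least
`k` neighbours in `G_{[x,t]}` lying in that core; these neighbours are exactly the `u` with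
`σ_x(u, v) ≤ t`. On the other side, the `k`-th entry of a sorted list is `≤ t` iff at least `k`
of its entries are.
-/

lemma ENat.eq_of_forall_le_natCast_iff {m n : ℕ∞} (h : ∀ t : ℕ, m ≤ t ↔ n ≤ t) : m = n := by
  refine le_antisymm ?_ ?_
  · induction n using ENat.recTopCoe with
    | top => exact le_top
    | coe t => exact (h t).2 le_rfl
  · induction m using ENat.recTopCoe with
    | top => exact le_top
    | coe t => exact (h t).1 le_rfl

lemma IsUpperSet.sInf_natCast_image_le_iff {S : Set ℕ} (hS : IsUpperSet S) {t : ℕ} :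
    sInf ((fun n : ℕ => (n : ℕ∞)) '' S) ≤ t ↔ t ∈ S := by
  refine ⟨fun h => ?_, fun ht => sInf_le ⟨t, ht, rfl⟩⟩
  by_contra ht
  have h' : ((t + 1 : ℕ) : ℕ∞) ≤ sInf ((fun n : ℕ => (n : ℕ∞)) '' S) := by
    refine le_sInf ?_
    rintro _ ⟨s, hs, rfl⟩
    exact Nat.cast_le.2 (not_le.1 fun hst => ht (hS hst hs))
  exact absurd (Nat.cast_le.1 (h'.trans h)) (by omega)

lemma List.Pairwise.getD_le_iff_lt_countP {α : Type*} [LinearOrder α] {l : List α}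
    (hl : l.Pairwise (· ≤ ·)) {d t : α} (htd : t < d) (i : ℕ) :
    l.getD i d ≤ t ↔ i < l.countP (· ≤ t) := by
  induction l generalizing i with
  | nil => simpa using htd
  | cons a l ih =>
    obtain ⟨ha, hl⟩ := List.pairwise_cons.1 hl
    have hcount : ¬a ≤ t → l.countP (· ≤ t) = 0 := fun hat =>
      List.countP_eq_zero.2 fun b hb hbt => hat ((ha b hb).trans (of_decide_eq_true hbt))
    cases i with
    | zero => by_cases hat : a ≤ t <;> simp [hat, hcount]
    | succ i =>
      rw [List.getD_cons_succ, ih hl, List.countP_cons]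
      by_cases hat : a ≤ t <;> simp [hat, hcount]

lemma kthSmallest_le_natCast_iff {m : Multiset ℕ∞} {k : ℕ} (hk : 1 ≤ k) (t : ℕ) :
    kthSmallest m k ≤ t ↔ k ≤ m.countP (· ≤ (t : ℕ∞)) := by
  rw [kthSmallest, (m.pairwise_sort _).getD_le_iff_lt_countP (ENat.natCast_lt_top t),
    ← Multiset.coe_countP, Multiset.sort_eq]
  omega

section Core

variable {V : Type*} [Finite V] {k : ℕ}

lemma kDense.mono_s5 {G G' : SimpleGraph V} (h : G ≤ G') {S : Set V} (hS : kDense k G S) :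
    kDense k G' S := fun w hw =>
  (hS w hw).trans (Set.ncard_le_ncard (fun _ hu => ⟨hu.1, h hu.2⟩) (Set.toFinite _))

lemma coreSet_mono_s5 {G G' : SimpleGraph V} (h : G ≤ G') : coreSet k G ⊆ coreSet k G' :=
  Set.sUnion_mono fun _ hS => hS.mono_s5 h

lemma kDense_coreSet (G : SimpleGraph V) : kDense k G (coreSet k G) := by
  intro w hw
  obtain ⟨S, hS, hwS⟩ := Set.mem_sUnion.1 hw
  exact (hS w hwS).trans <| Set.ncard_le_ncard
    (fun u hu => ⟨Set.mem_sUnion.2 ⟨S, hS, hu.1⟩, hu.2⟩) (Set.toFinite _)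

lemma mem_coreSet_iff {G : SimpleGraph V} {v : V} :
    v ∈ coreSet k G ↔ k ≤ {u | u ∈ coreSet k G ∧ G.Adj v u}.ncard := by
  refine ⟨fun hv => kDense_coreSet G v hv, fun h => ?_⟩
  -- adding `v` to the core keeps it `k`-dense
  have hsub (w : V) : {u | u ∈ coreSet k G ∧ G.Adj w u}.ncard ≤
      {u | u ∈ insert v (coreSet k G) ∧ G.Adj w u}.ncard :=
    Set.ncard_le_ncard (fun u hu => ⟨Set.mem_insert_of_mem _ hu.1, hu.2⟩) (Set.toFinite _)
  refine Set.mem_sUnion.2 ⟨insert v (coreSet k G), ?_, Set.mem_insert _ _⟩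
  rintro w (rfl | hw)
  · exact h.trans (hsub w)
  · exact (kDense_coreSet G w hw).trans (hsub w)

end Core

section Temporal

open Finset

variable {V : Type*} {k : ℕ} (G : TemporalGraph V) (x : ℕ)

lemma detemp_mono_s5 {t t' : ℕ} (h : t ≤ t') : detemp G x t ≤ detemp G x t' :=
  fun _ _ ⟨s, hxs, hst, hs⟩ => ⟨s, hxs, hst.trans h, hs⟩

lemma detemp_le_detempAll (t : ℕ) : detemp G x t ≤ detempAll G :=
  fun _ _ ⟨s, _, _, hs⟩ => ⟨s, hs⟩

lemma tcoreV_mono_s5 [Finite V] {t t' : ℕ} (h : t ≤ t') : tcoreV k G x t ⊆ tcoreV k G x t' :=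
  coreSet_mono_s5 (detemp_mono_s5 G x h)

lemma coreTime_le_iff [Finite V] (v : V) (t : ℕ) :
    coreTime k G x v ≤ t ↔ x ≤ t ∧ v ∈ tcoreV k G x t :=
  IsUpperSet.sInf_natCast_image_le_iff (S := {t | x ≤ t ∧ v ∈ tcoreV k G x t})
    fun _ _ hst ⟨hx, hv⟩ => ⟨hx.trans hst, tcoreV_mono_s5 G x hst hv⟩

lemma edgeCoreTime_le_iff [Finite V] (u v : V) (t : ℕ) :
    edgeCoreTime k G x u v ≤ t ↔
      x ≤ t ∧ u ∈ tcoreV k G x t ∧ v ∈ tcoreV k G x t ∧ (detemp G x t).Adj u v :=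
  IsUpperSet.sInf_natCast_image_le_iff
    (S := {t | x ≤ t ∧ u ∈ tcoreV k G x t ∧ v ∈ tcoreV k G x t ∧ (detemp G x t).Adj u v})
    fun _ _ hst ⟨hx, hu, hv, huv⟩ =>
    ⟨hx.trans hst, tcoreV_mono_s5 G x hst hu, tcoreV_mono_s5 G x hst hv, detemp_mono_s5 G x hst huv⟩

lemma coreTime_le_iff_card_edgeCoreTime_le [Fintype V] (hk : 1 ≤ k) (v : V) (t : ℕ) :
    coreTime k G x v ≤ t ↔
      k ≤ #{u ∈ (detempAll G).neighborFinset v | edgeCoreTime k G x u v ≤ t} := by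
  set A := {u ∈ (detempAll G).neighborFinset v | edgeCoreTime k G x u v ≤ t}
  have hA : (A : Set V) ⊆ {u | u ∈ tcoreV k G x t ∧ (detemp G x t).Adj v u} := fun u hu => by
    obtain ⟨-, hu, -, huv⟩ := (edgeCoreTime_le_iff G x u v t).1 (Finset.mem_filter.1 hu).2
    exact ⟨hu, huv.symm⟩
  rw [coreTime_le_iff, tcoreV, mem_coreSet_iff]
  constructor
  · rintro ⟨hx, hv⟩
    have hsub : {u | u ∈ tcoreV k G x t ∧ (detemp G x t).Adj v u} ⊆ A := by
      rintro u ⟨hu, hvu⟩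
      refine Finset.mem_filter.2 ⟨?_, (edgeCoreTime_le_iff G x u v t).2 ⟨hx, hu, ?_, hvu.symm⟩⟩
      · exact (SimpleGraph.mem_neighborFinset _ _ _).2 (detemp_le_detempAll G x t hvu)
      · exact mem_coreSet_iff.2 hv
    exact hv.trans ((Set.ncard_le_ncard hsub).trans (Set.ncard_coe_finset A).le)
  · intro hcard
    -- `1 ≤ k` makes `A` nonempty, and any of its elements witnesses `x ≤ t`
    obtain ⟨u, hu⟩ := Finset.card_pos.1 (hk.trans hcard)
    refine ⟨((edgeCoreTime_le_iff G x u v t).1 (Finset.mem_filter.1 hu).2).1, ?_⟩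
    exact hcard.trans <| (Set.ncard_coe_finset A).ge.trans (Set.ncard_le_ncard hA)

end Temporal

/-- The vertex `k`-core time `σ_x(v, G)` equals the `k`-th smallest
element of the multiset `{σ_x(u, v, G) : u adjacent to v in the detemporalized
graph of G}` (with value `⊤` when fewer than `k` elements are finite — which is
automatic since infinite elements of the multiset are `⊤` and missing elements
default to `⊤`). -/
theorem stmt5 {V : Type*} [Fintype V] (k : ℕ) (hk : 1 ≤ k)
    (G : TemporalGraph V) (x : ℕ) (v : V) :
    coreTime k G x v =
      kthSmallest
        (((detempAll G).neighborFinset v).val.map fun u => edgeCoreTime k G x u v) k := by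
  refine ENat.eq_of_forall_le_natCast_iff fun t => ?_
  rw [coreTime_le_iff_card_edgeCoreTime_le G x hk, kthSmallest_le_natCast_iff hk,
    Multiset.countP_map]
  rfl
end
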